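/- Fix matrices A ∈ ℝ^{n×n}, B^L ∈ ℝ^{n×r^L}, B^F ∈ ℝ^{n×r^F}, and symmetric matrices Q ⪰ 0, Q_f ⪰ 0, R ≻ 0 of appropriate sizes. For M ∈ ℝ^{r^F×n} define Ã(M) = A + B^F M A and B̃(M) = B^L + B^F M B^L. Define the backward Riccati recursion P_T(M) = Q_f and P_t(M) = Q + Ã(M)ᵀ P_{t+1}(M) Ã(M) − Ã(M)ᵀ P_{t+1}(M) B̃(M) (R + B̃(M)ᵀ P_{t+1}(M) B̃(M))^{-1} B̃(M)ᵀ P_{t+1}(M) Ã(M). Then for every t and every (i,j), the entry (P_t(M))_{ij} is a rational function of the entries of M: there exist polynomials p_{t,ij} and q_t in the entries of M with q_t(M) > 0 for all M, such that (P_t(M))_{ij} = p_{t,ij}(M)/q_t(M). -/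

import Mathlib

/-!
Matrix-valued functions with entries in a subalgebra `S` of functions are closed under sums,
products and transposes, and their determinants and adjugates again lie in `S`: such a matrix
lifts to a matrix over `S`, and evaluation at a point is a ring hom. Rational functions with
everywhere-positive denominator form such a subalgebra, closed moreover under inverting positive
functions, so by the adjugate formula a Riccati step preserves entrywise rationality as soon as
`det (R + B̃ᵀ P B̃) > 0`. By backward induction this holds throughout: a Riccati step preserves
positive semidefiniteness (it is a Schur complement), so `R + B̃ᵀ P B̃` is positive definite.
-/

open Matrix MvPolynomial

section EntrywiseIn

variable {α R : Type*} [CommRing R] (S : Subalgebra R (α → R))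

def EntrywiseIn {I J : Type*} (F : α → Matrix I J R) : Prop :=
  ∀ i j, (fun x => F x i j) ∈ S

namespace EntrywiseIn

variable {S} {I J K : Type*}

lemma const (C : Matrix I J R) : EntrywiseIn S fun _ => C :=
  fun i j => S.algebraMap_mem (C i j)

lemma add {F G : α → Matrix I J R} (hF : EntrywiseIn S F) (hG : EntrywiseIn S G) :
    EntrywiseIn S fun x => F x + G x :=
  fun i j => S.add_mem (hF i j) (hG i j)

lemma sub {F G : α → Matrix I J R} (hF : EntrywiseIn S F) (hG : EntrywiseIn S G) :
    EntrywiseIn S fun x => F x - G x :=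
  fun i j => S.sub_mem (hF i j) (hG i j)

lemma transpose {F : α → Matrix I J R} (hF : EntrywiseIn S F) :
    EntrywiseIn S fun x => (F x)ᵀ :=
  fun i j => hF j i

lemma mul [Fintype J] {F : α → Matrix I J R} {G : α → Matrix J K R}
    (hF : EntrywiseIn S F) (hG : EntrywiseIn S G) : EntrywiseIn S fun x => F x * G x := by
  intro i k
  convert S.sum_mem (t := Finset.univ) fun j _ => S.mul_mem (hF i j) (hG j k) using 1
  ext x
  simp [Matrix.mul_apply]

def evalAt (S : Subalgebra R (α → R)) (x : α) : S →+* R :=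
  (Pi.evalRingHom (fun _ => R) x).comp S.val.toRingHom

lemma exists_eq_mapMatrix [Fintype I] [DecidableEq I] {F : α → Matrix I I R}
    (hF : EntrywiseIn S F) : ∃ G : Matrix I I S, ∀ x, F x = (evalAt S x).mapMatrix G :=
  ⟨Matrix.of fun i j => ⟨_, hF i j⟩, fun _ => rfl⟩

lemma det_mem [Fintype I] [DecidableEq I] {F : α → Matrix I I R} (hF : EntrywiseIn S F) :
    (fun x => (F x).det) ∈ S := by
  obtain ⟨G, hG⟩ := hF.exists_eq_mapMatrix
  convert G.det.2 using 1
  ext x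
  rw [hG, ← RingHom.map_det]
  rfl

lemma adjugate [Fintype I] [DecidableEq I] {F : α → Matrix I I R} (hF : EntrywiseIn S F) :
    EntrywiseIn S fun x => (F x).adjugate := by
  obtain ⟨G, hG⟩ := hF.exists_eq_mapMatrix
  intro i j
  convert (G.adjugate i j).2 using 1
  ext x
  change (F x).adjugate i j = _
  rw [hG, ← RingHom.map_adjugate]
  rfl

lemma inv [Fintype I] [DecidableEq I] {F : α → Matrix I I R} (hF : EntrywiseIn S F)
    (hdet : (fun x => Ring.inverse (F x).det) ∈ S) : EntrywiseIn S fun x => (F x)⁻¹ := by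
  intro i j
  convert S.mul_mem hdet (hF.adjugate i j) using 1
  ext x
  simp [Matrix.inv_def]

end EntrywiseIn

end EntrywiseIn

section RatFuncPosDenom

variable {α σ : Type*}

def ratFuncPosDenom (φ : α → σ → ℝ) : Subalgebra ℝ (α → ℝ) where
  carrier := {f | ∃ p q : MvPolynomial σ ℝ,
    (∀ x, 0 < eval (φ x) q) ∧ f = fun x => eval (φ x) p / eval (φ x) q}
  mul_mem' := by
    rintro _ _ ⟨pf, qf, hqf, rfl⟩ ⟨pg, qg, hqg, rfl⟩
    refine ⟨pf * pg, qf * qg, fun x => ?_, ?_⟩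
    · simpa using mul_pos (hqf x) (hqg x)
    · ext x
      simp [div_mul_div_comm]
  add_mem' := by
    rintro _ _ ⟨pf, qf, hqf, rfl⟩ ⟨pg, qg, hqg, rfl⟩
    refine ⟨pf * qg + qf * pg, qf * qg, fun x => ?_, ?_⟩
    · simpa using mul_pos (hqf x) (hqg x)
    · ext x
      simp [div_add_div _ _ (hqf x).ne' (hqg x).ne']
  algebraMap_mem' c := ⟨C c, 1, fun x => by simp, by ext; simp⟩

variable {φ : α → σ → ℝ}

lemma coord_mem_ratFuncPosDenom (i : σ) : (fun x => φ x i) ∈ ratFuncPosDenom φ :=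
  ⟨X i, 1, fun x => by simp, by ext; simp⟩

lemma inv_mem_ratFuncPosDenom {f : α → ℝ} (hf : f ∈ ratFuncPosDenom φ)
    (hpos : ∀ x, 0 < f x) : (fun x => (f x)⁻¹) ∈ ratFuncPosDenom φ := by
  obtain ⟨p, q, hq, rfl⟩ := hf
  refine ⟨q, p, fun x => ?_, by ext; simp⟩
  simpa [div_pos_iff_of_pos_right (hq x)] using hpos x

lemma exists_common_denominator {ι : Type*} [Fintype ι] {f : ι → α → ℝ}
    (hf : ∀ k, f k ∈ ratFuncPosDenom φ) :
    ∃ q : MvPolynomial σ ℝ, (∀ x, 0 < eval (φ x) q) ∧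
      ∀ k, ∃ p : MvPolynomial σ ℝ, ∀ x, f k x = eval (φ x) p / eval (φ x) q := by
  classical
  choose p q hq hpq using hf
  refine ⟨∏ k, q k, fun x => ?_,
    fun k => ⟨p k * ∏ l ∈ Finset.univ.erase k, q l, fun x => ?_⟩⟩
  · simpa using Finset.prod_pos fun k _ => hq k x
  · have hrest : ∏ l ∈ Finset.univ.erase k, eval (φ x) (q l) ≠ 0 :=
      (Finset.prod_pos fun l _ => hq l x).ne'
    rw [hpq, map_mul, map_prod, map_prod, ← Finset.mul_prod_erase _ _ (Finset.mem_univ k),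
      mul_div_mul_right _ _ hrest]

end RatFuncPosDenom

section Riccati

variable {m k K : Type*} [Fintype m] [Fintype k]

noncomputable def riccatiStep [DecidableEq k] [CommRing K] (A : Matrix m m K) (B : Matrix m k K)
    (Q : Matrix m m K) (R : Matrix k k K) (P : Matrix m m K) : Matrix m m K :=
  Q + Aᵀ * P * A - Aᵀ * P * B * (R + Bᵀ * P * B)⁻¹ * Bᵀ * P * A

lemma EntrywiseIn.riccatiStep [DecidableEq k] {α K : Type*} [CommRing K]
    {S : Subalgebra K (α → K)} {A Q P : α → Matrix m m K} {B : α → Matrix m k K}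
    {R : α → Matrix k k K} (hA : EntrywiseIn S A) (hB : EntrywiseIn S B)
    (hQ : EntrywiseIn S Q) (hR : EntrywiseIn S R) (hP : EntrywiseIn S P)
    (hdet : (fun x => Ring.inverse (R x + (B x)ᵀ * P x * B x).det) ∈ S) :
    EntrywiseIn S fun x => _root_.riccatiStep (A x) (B x) (Q x) (R x) (P x) := by
  have hAP := hA.transpose.mul hP
  have hSinv := (hR.add ((hB.transpose.mul hP).mul hB)).inv hdet
  exact (hQ.add (hAP.mul hA)).sub (((((hAP.mul hB).mul hSinv).mul hB.transpose).mul hP).mul hA)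

variable [Field K] [PartialOrder K] [StarRing K] [TrivialStar K]

lemma Matrix.PosSemidef.transpose_mul_mul_same {P : Matrix m m K} (hP : P.PosSemidef)
    (B : Matrix m k K) : (Bᵀ * P * B).PosSemidef := by
  simpa [conjTranspose_eq_transpose_of_trivial] using hP.conjTranspose_mul_mul_same B

variable [StarOrderedRing K]

lemma Matrix.PosDef.add_transpose_mul_mul_same {R : Matrix k k K} (hR : R.PosDef)
    {P : Matrix m m K} (hP : P.PosSemidef) (B : Matrix m k K) : (R + Bᵀ * P * B).PosDef :=
  hR.add_posSemidef (hP.transpose_mul_mul_same B)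

lemma riccatiStep_posSemidef [DecidableEq m] [DecidableEq k] {Q P : Matrix m m K}
    {R : Matrix k k K} (hQ : Q.PosSemidef) (hR : R.PosDef) (hP : P.PosSemidef)
    (A : Matrix m m K) (B : Matrix m k K) : (riccatiStep A B Q R P).PosSemidef := by
  have hS := hR.add_transpose_mul_mul_same hP B
  have := hS.isUnit.invertible
  have hPt : Pᵀ = P := by
    simpa [conjTranspose_eq_transpose_of_trivial] using hP.isHermitian.eq
  have hsym : (Aᵀ * P * B)ᴴ = Bᵀ * P * A := by
    simp [conjTranspose_eq_transpose_of_trivial, Matrix.transpose_mul, hPt, Matrix.mul_assoc]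
  -- the quadratic form `(x, u) ↦ (A x + B u)ᵀ P (A x + B u) + uᵀ R u`
  have hblock : (fromBlocks (Aᵀ * P * A) (Aᵀ * P * B) (Aᵀ * P * B)ᴴ
      (R + Bᵀ * P * B)).PosSemidef := by
    have hsplit : fromBlocks (Aᵀ * P * A) (Aᵀ * P * B) (Aᵀ * P * B)ᴴ (R + Bᵀ * P * B) =
        (fromCols A B)ᵀ * P * fromCols A B +
          (fromCols 0 1 : Matrix k (m ⊕ k) K)ᵀ * R * (fromCols 0 1 : Matrix k (m ⊕ k) K) := by
      rw [hsym, transpose_fromCols, fromRows_mul, fromRows_mul_fromCols, transpose_fromCols,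
        fromRows_mul, fromRows_mul_fromCols, fromBlocks_add]
      simp [add_comm]
    rw [hsplit]
    exact (hP.transpose_mul_mul_same _).add (hR.posSemidef.transpose_mul_mul_same _)
  have hschur := (PosDef.fromBlocks₂₂ _ _ hS).mp hblock
  rw [hsym] at hschur
  have hstep : riccatiStep A B Q R P =
      Q + (Aᵀ * P * A - Aᵀ * P * B * (R + Bᵀ * P * B)⁻¹ * (Bᵀ * P * A)) := by
    simp only [riccatiStep, add_sub_assoc, Matrix.mul_assoc]
  rw [hstep]
  exact hQ.add hschur

end Riccati

/-- Proposition 1: every entry of the Riccati matrices `P_t(M)` of the parameterized LQG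
problem (with `Ã(M) = A + B^F M A`, `B̃(M) = B^L + B^F M B^L`) is a rational function of
the entries of `M`, with a denominator polynomial that is positive for every `M`. -/
theorem stmt_10 {n rL rF : ℕ} (A : Matrix (Fin n) (Fin n) ℝ)
    (BL : Matrix (Fin n) (Fin rL) ℝ) (BF : Matrix (Fin n) (Fin rF) ℝ)
    (Q Qf : Matrix (Fin n) (Fin n) ℝ) (R : Matrix (Fin rL) (Fin rL) ℝ)
    (hQ : Q.PosSemidef) (hQf : Qf.PosSemidef) (hR : R.PosDef) (T : ℕ)
    (P : ℕ → Matrix (Fin rF) (Fin n) ℝ → Matrix (Fin n) (Fin n) ℝ)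
    (hPT : ∀ M, P T M = Qf)
    (hrec : ∀ t, t < T → ∀ M : Matrix (Fin rF) (Fin n) ℝ,
      P t M =
        Q + (A + BF * M * A)ᵀ * P (t + 1) M * (A + BF * M * A) -
          (A + BF * M * A)ᵀ * P (t + 1) M * (BL + BF * M * BL) *
            (R + (BL + BF * M * BL)ᵀ * P (t + 1) M * (BL + BF * M * BL))⁻¹ *
            (BL + BF * M * BL)ᵀ * P (t + 1) M * (A + BF * M * A)) :
    ∀ t ≤ T, ∃ q : MvPolynomial (Fin rF × Fin n) ℝ,
      (∀ M : Matrix (Fin rF) (Fin n) ℝ,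
        0 < MvPolynomial.eval (fun x => M x.1 x.2) q) ∧
      ∀ i j : Fin n, ∃ p : MvPolynomial (Fin rF × Fin n) ℝ,
        ∀ M : Matrix (Fin rF) (Fin n) ℝ,
          P t M i j = MvPolynomial.eval (fun x => M x.1 x.2) p /
            MvPolynomial.eval (fun x => M x.1 x.2) q := by
  set S := ratFuncPosDenom fun (M : Matrix (Fin rF) (Fin n) ℝ) (ij : Fin rF × Fin n) =>
    M ij.1 ij.2
  have hM : EntrywiseIn S fun M => M := fun i j => coord_mem_ratFuncPosDenom (i, j)
  have hA : EntrywiseIn S fun M => A + BF * M * A :=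
    (EntrywiseIn.const A).add (((EntrywiseIn.const BF).mul hM).mul (EntrywiseIn.const A))
  have hB : EntrywiseIn S fun M => BL + BF * M * BL :=
    (EntrywiseIn.const BL).add (((EntrywiseIn.const BF).mul hM).mul (EntrywiseIn.const BL))
  have hP : ∀ t ≤ T, (∀ M, (P t M).PosSemidef) ∧ EntrywiseIn S (P t) := by
    intro t ht
    induction ht using Nat.decreasingInduction with
    | self => exact ⟨fun M => hPT M ▸ hQf, funext hPT ▸ EntrywiseIn.const Qf⟩
    | of_succ t ht ih =>
      obtain ⟨hpsd, hent⟩ := ih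
      have hstep :
          P t = fun M => riccatiStep (A + BF * M * A) (BL + BF * M * BL) Q R (P (t + 1) M) :=
        funext (hrec t ht)
      rw [hstep]
      have hdet M := (hR.add_transpose_mul_mul_same (hpsd M) (BL + BF * M * BL)).det_pos
      have hS := (EntrywiseIn.const R).add ((hB.transpose.mul hent).mul hB)
      refine ⟨fun M => riccatiStep_posSemidef hQ hR (hpsd M) _ _,
        hA.riccatiStep hB (EntrywiseIn.const Q) (EntrywiseIn.const R) hent ?_⟩
      simpa only [Ring.inverse_eq_inv] using inv_mem_ratFuncPosDenom hS.det_mem hdet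
  intro t ht
  obtain ⟨q, hq, hp⟩ :=
    exists_common_denominator fun ij : Fin n × Fin n => (hP t ht).2 ij.1 ij.2
  exact ⟨q, hq, fun i j => hp (i, j)⟩
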